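/- Let L₁, L₂ : List (Fin (2*n)) be duplicate-free lists with disjoint sets of elements such that, for each ℓ ∈ {1, 2}, Lℓ contains either both or neither of the nodes of every pickup–delivery pair (i, i + n), and whenever Lℓ contains both, the index of i in Lℓ is strictly smaller than the index of i + n in Lℓ. Suppose the pair (i, i + n) has both nodes in L₁ and the pair (j, j + n) has both nodes in L₂, where i and j are pickup nodes. Then the lists L₁' and L₂' obtained by exchanging the two pairs — L₁' is L₁ with i replaced by j and i + n replaced by j + n, and L₂' is L₂ with j replaced by i and j + n replaced by i + n — are again duplicate-free with disjoint element sets, each contains both or neither node of every pair, and whenever one of them contains both nodes of a pair, the pickup node occurs before the paired delivery node. -/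

import Mathlib

/-- A vehicle route `L` is admissible if, for every pickup–delivery pair
`(i, i + n)`, it contains either both nodes or neither, and whenever it contains
both, the pickup node `i` occurs strictly before the paired delivery node
`i + n`. -/
def GoodRoute (n : ℕ) (L : List (Fin (2 * n))) : Prop :=
  ∀ i : Fin (2 * n), ∀ _h : (i : ℕ) < n,
    (i ∈ L ↔ (⟨(i : ℕ) + n, by omega⟩ : Fin (2 * n)) ∈ L) ∧
    (i ∈ L → (⟨(i : ℕ) + n, by omega⟩ : Fin (2 * n)) ∈ L →
      L.idxOf i < L.idxOf (⟨(i : ℕ) + n, by omega⟩ : Fin (2 * n)))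

lemma indexOf_map_aux {α : Type*} [DecidableEq α] (f : α → α) (L : List α)
    (hinj : ∀ x ∈ L, ∀ y ∈ L, f x = f y → x = y) (a : α) (ha : a ∈ L) :
    (L.map f).idxOf (f a) = L.idxOf a := by
  induction L with
  | nil => simp at ha
  | cons b t ih =>
    rcases eq_or_ne a b with rfl | hab
    · simp
    · have hfab : f a ≠ f b := fun h => hab (hinj a ha b (by simp) h)
      have hat : a ∈ t := (List.mem_cons.1 ha).resolve_left hab
      rw [List.map_cons, List.idxOf_cons_ne _ hfab.symm, List.idxOf_cons_ne _ hab.symm,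
        ih (fun x hx y hy => hinj x (by simp [hx]) y (by simp [hy]) ) hat]

lemma vne_aux {m : ℕ} {a b : Fin m} (h : (a : ℕ) ≠ (b : ℕ)) : a ≠ b :=
  fun e => h (congrArg Fin.val e)

lemma key_lemma (n : ℕ) (L : List (Fin (2 * n))) (hL : L.Nodup) (g : GoodRoute n L)
    (i j : Fin (2 * n)) (hi : (i : ℕ) < n) (hj : (j : ℕ) < n)
    (hiL : i ∈ L) (hdiL : (⟨(i : ℕ) + n, by have := hL; omega⟩ : Fin (2 * n)) ∈ L)
    (hjL : j ∉ L) (hdjL : (⟨(j : ℕ) + n, by have := hL; omega⟩ : Fin (2 * n)) ∉ L) :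
    let di : Fin (2 * n) := ⟨(i : ℕ) + n, by have := hL; omega⟩
    let dj : Fin (2 * n) := ⟨(j : ℕ) + n, by have := hL; omega⟩
    let f : Fin (2 * n) → Fin (2 * n) := fun x => if x = i then j else if x = di then dj else x
    (L.map f).Nodup ∧ GoodRoute n (L.map f) ∧
      ∀ x, x ∈ L.map f ↔ (x = j ∨ x = dj ∨ (x ∈ L ∧ x ≠ i ∧ x ≠ di)) := by
  intro di dj f
  have hdiL' : di ∈ L := hdiL
  have hdjL' : dj ∉ L := hdjL
  have hdiv : (di : ℕ) = (i : ℕ) + n := rfl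
  have hdjv : (dj : ℕ) = (j : ℕ) + n := rfl
  have hij : i ≠ j := fun e => hjL (e ▸ hiL)
  have hijv : (i : ℕ) ≠ (j : ℕ) := fun e => hij (Fin.ext e)
  have hidi : i ≠ di := vne_aux (by omega)
  have hjdj : j ≠ dj := vne_aux (by omega)
  have hdij : di ≠ j := vne_aux (by omega)
  have hdji : dj ≠ i := vne_aux (by omega)
  have hidj : i ≠ dj := vne_aux (by omega)
  have hdidj : di ≠ dj := vne_aux (by omega)
  have hfi : f i = j := by simp [f]
  have hfdi : f di = dj := by simp [f, hidi.symm]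
  have hfx : ∀ x, x ≠ i → x ≠ di → f x = x := by
    intro x h1 h2; simp [f, h1, h2]
  have hinj : ∀ x ∈ L, ∀ y ∈ L, f x = f y → x = y := by
    intro x hx y hy h
    have hxj : x ≠ j := fun e => hjL (e ▸ hx)
    have hxdj : x ≠ dj := fun e => hdjL' (e ▸ hx)
    have hyj : y ≠ j := fun e => hjL (e ▸ hy)
    have hydj : y ≠ dj := fun e => hdjL' (e ▸ hy)
    by_cases h1 : x = i <;> by_cases h2 : y = i
    · rw [h1, h2]
    · by_cases h3 : y = di
      · rw [h1, hfi, h3, hfdi] at h; exact absurd h hjdj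
      · rw [h1, hfi, hfx y h2 h3] at h; exact absurd h.symm hyj
    · by_cases h3 : x = di
      · rw [h2, hfi, h3, hfdi] at h; exact absurd h.symm hjdj
      · rw [h2, hfi, hfx x h1 h3] at h; exact absurd h hxj
    · by_cases h3 : x = di <;> by_cases h4 : y = di
      · rw [h3, h4]
      · rw [h3, hfdi, hfx y h2 h4] at h; exact absurd h.symm hydj
      · rw [h4, hfdi, hfx x h1 h3] at h; exact absurd h hxdj
      · rwa [hfx x h1 h3, hfx y h2 h4] at h
  have hmem : ∀ x, x ∈ L.map f ↔ (x = j ∨ x = dj ∨ (x ∈ L ∧ x ≠ i ∧ x ≠ di)) := by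
    intro x
    constructor
    · intro hx
      obtain ⟨y, hy, hyx⟩ := List.mem_map.1 hx
      by_cases h1 : y = i
      · left; rw [← hyx, h1, hfi]
      · by_cases h2 : y = di
        · right; left; rw [← hyx, h2, hfdi]
        · right; right
          rw [hfx y h1 h2] at hyx
          exact ⟨hyx ▸ hy, hyx ▸ h1, hyx ▸ h2⟩
    · rintro (rfl | rfl | ⟨hx, h1, h2⟩)
      · exact List.mem_map.2 ⟨i, hiL, hfi⟩
      · exact List.mem_map.2 ⟨di, hdiL', hfdi⟩
      · exact List.mem_map.2 ⟨x, hx, hfx x h1 h2⟩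
  refine ⟨List.Nodup.map_on hinj hL, ?_, hmem⟩
  intro k hk
  set dk : Fin (2 * n) := (⟨(k : ℕ) + n, by omega⟩ : Fin (2 * n)) with hdk
  have hdkv : (dk : ℕ) = (k : ℕ) + n := rfl
  by_cases hkj : k = j
  · have hdkdj : dk = dj := Fin.ext (by rw [hdkv, hdjv, hkj])
    constructor
    · rw [hmem, hmem, hdkdj]; simp [hkj]
    · intro _ _
      have e1 : (L.map f).idxOf k = L.idxOf i := by
        rw [hkj, ← hfi]; exact indexOf_map_aux f L hinj i hiL
      have e2 : (L.map f).idxOf dk = L.idxOf di := by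
        rw [hdkdj, ← hfdi]; exact indexOf_map_aux f L hinj di hdiL'
      rw [e1, e2]
      exact (g i hi).2 hiL hdiL'
  · have hkjv : (k : ℕ) ≠ (j : ℕ) := fun e => hkj (Fin.ext e)
    by_cases hki : k = i
    · have hdkdi : dk = di := Fin.ext (by rw [hdkv, hdiv, hki])
      have h1 : k ∉ L.map f := by
        rw [hmem]
        rintro (h | h | ⟨_, h, _⟩)
        · exact hkj h
        · exact hidj (hki.symm.trans h)
        · exact h hki
      have h2 : dk ∉ L.map f := by
        rw [hmem]
        rintro (h | h | ⟨_, _, h⟩)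
        · have := congrArg Fin.val h; rw [hdkv] at this; omega
        · have := congrArg Fin.val h; rw [hdkv, hdjv] at this
          exact hkj (Fin.ext (by omega))
        · exact h hdkdi
      exact ⟨by simp [h1, h2], fun h _ => absurd h h1⟩
    · have hkiv : (k : ℕ) ≠ (i : ℕ) := fun e => hki (Fin.ext e)
      have hkdi : k ≠ di := vne_aux (by omega)
      have hkdj : k ≠ dj := vne_aux (by omega)
      have hdkj : dk ≠ j := vne_aux (by omega)
      have hdki : dk ≠ i := vne_aux (by omega)
      have hdkdj : dk ≠ dj := vne_aux (by omega)
      have hdkdi : dk ≠ di := vne_aux (by omega)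
      have e1 : k ∈ L.map f ↔ k ∈ L := by
        rw [hmem]; simp [hkj, hkdj, hki, hkdi]
      have e2 : dk ∈ L.map f ↔ dk ∈ L := by
        rw [hmem]; simp [hdkj, hdkdj, hdki, hdkdi]
      constructor
      · rw [e1, e2]; exact (g k hk).1
      · intro ha hb
        have i1 : (L.map f).idxOf k = L.idxOf k := by
          conv_lhs => rw [← hfx k hki hkdi]
          exact indexOf_map_aux f L hinj k (e1.1 ha)
        have i2 : (L.map f).idxOf dk = L.idxOf dk := by
          conv_lhs => rw [← hfx dk hdki hdkdi]
          exact indexOf_map_aux f L hinj dk (e2.1 hb)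
        rw [i1, i2]
        exact (g k hk).2 (e1.1 ha) (e2.1 hb)

/-- Node pair exchange across two vehicle routes: exchanging the pair `(i, i + n)`
carried in route `L₁` with the pair `(j, j + n)` carried in route `L₂` (replacing
`i` by `j` and `i + n` by `j + n` in `L₁`, and `j` by `i` and `j + n` by `i + n`
in `L₂`) yields routes that are again duplicate-free, mutually disjoint, and
admissible: each contains both or neither node of every pair, and pickups precede
their paired deliveries. -/
theorem pair_exchange_across_routes_feasible (n : ℕ)
    (L₁ L₂ : List (Fin (2 * n)))
    (h₁ : L₁.Nodup) (h₂ : L₂.Nodup) (hdisj : L₁.Disjoint L₂)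
    (g₁ : GoodRoute n L₁) (g₂ : GoodRoute n L₂)
    (i j : Fin (2 * n)) (hi : (i : ℕ) < n) (hj : (j : ℕ) < n)
    (hiL : i ∈ L₁) (hdiL : (⟨(i : ℕ) + n, by omega⟩ : Fin (2 * n)) ∈ L₁)
    (hjL : j ∈ L₂) (hdjL : (⟨(j : ℕ) + n, by omega⟩ : Fin (2 * n)) ∈ L₂) :
    let di : Fin (2 * n) := ⟨(i : ℕ) + n, by omega⟩
    let dj : Fin (2 * n) := ⟨(j : ℕ) + n, by omega⟩
    let L₁' := L₁.map fun x => if x = i then j else if x = di then dj else x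
    let L₂' := L₂.map fun x => if x = j then i else if x = dj then di else x
    L₁'.Nodup ∧ L₂'.Nodup ∧ L₁'.Disjoint L₂' ∧
      GoodRoute n L₁' ∧ GoodRoute n L₂' := by
  
  intro di dj L₁' L₂'
  have hdiL₁ : di ∈ L₁ := hdiL
  have hdjL₂ : dj ∈ L₂ := hdjL
  have hjL₁ : j ∉ L₁ := fun h => hdisj h hjL
  have hdjL₁ : dj ∉ L₁ := fun h => hdisj h hdjL₂
  have hiL₂ : i ∉ L₂ := fun h => hdisj hiL h
  have hdiL₂ : di ∉ L₂ := fun h => hdisj hdiL₁ h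
  obtain ⟨n1, g1', mem1⟩ :=
    key_lemma n L₁ h₁ g₁ i j hi hj hiL hdiL hjL₁ hdjL₁
  obtain ⟨n2, g2', mem2⟩ :=
    key_lemma n L₂ h₂ g₂ j i hj hi hjL hdjL hiL₂ hdiL₂
  have hdiv : (di : ℕ) = (i : ℕ) + n := rfl
  have hdjv : (dj : ℕ) = (j : ℕ) + n := rfl
  have hij : i ≠ j := fun e => hiL₂ (e ▸ hjL)
  have hijv : (i : ℕ) ≠ (j : ℕ) := fun e => hij (Fin.ext e)
  refine ⟨n1, n2, ?_, g1', g2'⟩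
  intro x hx1 hx2
  rw [mem1 x] at hx1
  rw [mem2 x] at hx2
  rcases hx1 with rfl | rfl | ⟨hxL, hxi, hxdi⟩ <;>
    rcases hx2 with h | h | ⟨hxL', hxj, hxdj⟩
  · exact hij h.symm
  · exact (vne_aux (m := 2 * n) (by omega)) h
  · exact hxj rfl
  · exact (vne_aux (m := 2 * n) (by omega)) h
  · exact hij (Fin.ext (by have := congrArg Fin.val h; rw [hdjv, hdiv] at this; omega))
  · exact hxdj rfl
  · exact hxi h
  · exact hxdi h
  · exact hdisj hxL hxL'
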